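/- arXiv:2312.11950 — 3 statements merged into one kernel-verified Lean document; each statement's English description precedes it below -/
import Mathlib

section
/- Let ω₀, ω₁, ω₂, ω₄ ∈ ℝ. Let β : [0,∞) → (0,∞) be continuously differentiable, and let η : [0,∞) → ℝ be continuously differentiable with η(0) = 0, such that s ↦ β(s)η(s), s ↦ β(s)η(s)² and s ↦ β′(s)η(s)² are integrable on (0,∞) and β(s)η(s)² → 0 as s → ∞. Let y : [0,1] → ℝ be three times continuously differentiable with y(0) = y(1) = 0 and y′(1) = ω₄·y′(0) + ∫₀^∞ β(s)η(s) ds. Then ∫₀¹ y(x)·(ω₀·y″(x) − ω₁·y‴(x) − ω₂·y′(x)) dx + ∫₀^∞ β(s)·(y′(0) − η′(s))·η(s) ds = −ω₀·∫₀¹ y′(x)² dx − (ω₁/2)·(1−ω₄²)·y′(0)² + (ω₁/2)·(∫₀^∞ β(s)η(s) ds)² + (1+ω₁ω₄)·y′(0)·∫₀^∞ β(s)η(s) ds + (1/2)·∫₀^∞ β′(s)η(s)² ds. -/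
open MeasureTheory Filter Set Real

/-- the integration-by-parts identity (di1) computing `⟨𝒜Θ,Θ⟩`
for the linear KdV–Burgers operator on the history space. -/
theorem kdvb_operator_inner_product_identity
    (ω₀ ω₁ ω₂ ω₄ : ℝ) (β β' η η' : ℝ → ℝ) (y : ℝ → ℝ)
    (hβpos : ∀ s ∈ Set.Ici (0:ℝ), 0 < β s)
    (hβd : ∀ s ∈ Set.Ici (0:ℝ), HasDerivWithinAt β (β' s) (Set.Ici 0) s)
    (hβ'cont : ContinuousOn β' (Set.Ici 0))
    (hηd : ∀ s ∈ Set.Ici (0:ℝ), HasDerivWithinAt η (η' s) (Set.Ici 0) s)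
    (hη'cont : ContinuousOn η' (Set.Ici 0))
    (hη0 : η 0 = 0)
    (hint1 : MeasureTheory.IntegrableOn (fun s => β s * η s) (Set.Ioi 0))
    (hint2 : MeasureTheory.IntegrableOn (fun s => β s * η s ^ 2) (Set.Ioi 0))
    (hint3 : MeasureTheory.IntegrableOn (fun s => β' s * η s ^ 2) (Set.Ioi 0))
    (hint4 : MeasureTheory.IntegrableOn (fun s => β s * η' s * η s) (Set.Ioi 0))
    (hlim : Filter.Tendsto (fun s => β s * η s ^ 2) Filter.atTop (nhds 0))
    (hy : ContDiff ℝ 3 y) (hy0 : y 0 = 0) (hy1 : y 1 = 0)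
    (hyb : deriv y 1 = ω₄ * deriv y 0 + ∫ s in Set.Ioi (0:ℝ), β s * η s) :
    (∫ x in (0:ℝ)..1, y x *
        (ω₀ * deriv (deriv y) x - ω₁ * deriv (deriv (deriv y)) x - ω₂ * deriv y x))
      + (∫ s in Set.Ioi (0:ℝ), β s * (deriv y 0 - η' s) * η s)
    = -ω₀ * (∫ x in (0:ℝ)..1, (deriv y x) ^ 2)
      - (ω₁ / 2) * (1 - ω₄ ^ 2) * (deriv y 0) ^ 2
      + (ω₁ / 2) * (∫ s in Set.Ioi (0:ℝ), β s * η s) ^ 2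
      + (1 + ω₁ * ω₄) * deriv y 0 * (∫ s in Set.Ioi (0:ℝ), β s * η s)
      + (1 / 2) * ∫ s in Set.Ioi (0:ℝ), β' s * η s ^ 2 := by
  -- regularity facts about y
  have hA := contDiff_succ_iff_deriv.mp (show ContDiff ℝ (2+1) y by norm_num; exact hy)
  have hB := contDiff_succ_iff_deriv.mp (show ContDiff ℝ (1+1) (deriv y) by norm_num; exact hA.2.2)
  have hC := contDiff_one_iff_deriv.mp hB.2.2
  have hdy : ∀ x : ℝ, HasDerivAt y (deriv y x) x := fun x => (hA.1 x).hasDerivAt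
  have hddy : ∀ x : ℝ, HasDerivAt (deriv y) (deriv (deriv y) x) x :=
    fun x => (hB.1 x).hasDerivAt
  have hdddy : ∀ x : ℝ, HasDerivAt (deriv (deriv y)) (deriv (deriv (deriv y)) x) x :=
    fun x => (hC.1 x).hasDerivAt
  have hcy : Continuous y := hy.continuous
  have hc1 : Continuous (deriv y) := hA.2.2.continuous
  have hc2 : Continuous (deriv (deriv y)) := hB.2.2.continuous
  have hc3 : Continuous (deriv (deriv (deriv y))) := hC.2
  -- interval integration by parts pieces
  have I2 : (∫ x in (0:ℝ)..1, y x * deriv (deriv y) x)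
      = - ∫ x in (0:ℝ)..1, deriv y x * deriv y x := by
    have := intervalIntegral.integral_mul_deriv_eq_deriv_mul
      (u := y) (v := deriv y) (u' := deriv y) (v' := deriv (deriv y))
      (fun x _ => hdy x) (fun x _ => hddy x)
      (hc1.intervalIntegrable 0 1) (hc2.intervalIntegrable 0 1)
    rw [this, hy0, hy1]; ring
  have I3 : (∫ x in (0:ℝ)..1, y x * deriv (deriv (deriv y)) x)
      = - ∫ x in (0:ℝ)..1, deriv y x * deriv (deriv y) x := by
    have := intervalIntegral.integral_mul_deriv_eq_deriv_mul
      (u := y) (v := deriv (deriv y)) (u' := deriv y) (v' := deriv (deriv (deriv y)))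
      (fun x _ => hdy x) (fun x _ => hdddy x)
      (hc1.intervalIntegrable 0 1) (hc3.intervalIntegrable 0 1)
    rw [this, hy0, hy1]; ring
  have J : (∫ x in (0:ℝ)..1, deriv y x * deriv (deriv y) x)
      = (deriv y 1) ^ 2 / 2 - (deriv y 0) ^ 2 / 2 := by
    have h : ∀ x ∈ Set.uIcc (0:ℝ) 1, HasDerivAt (fun t => (deriv y t) ^ 2 / 2)
        (deriv y x * deriv (deriv y) x) x := by
      intro x _
      have := ((hddy x).pow 2).div_const 2
      exact this.congr_deriv (by push_cast; ring)
    rw [intervalIntegral.integral_eq_sub_of_hasDerivAt h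
      ((hc1.mul hc2).intervalIntegrable 0 1)]
  have I1 : (∫ x in (0:ℝ)..1, y x * deriv y x) = 0 := by
    have h : ∀ x ∈ Set.uIcc (0:ℝ) 1, HasDerivAt (fun t => (y t) ^ 2 / 2)
        (y x * deriv y x) x := by
      intro x _
      have := ((hdy x).pow 2).div_const 2
      exact this.congr_deriv (by push_cast; ring)
    rw [intervalIntegral.integral_eq_sub_of_hasDerivAt h
      ((hcy.mul hc1).intervalIntegrable 0 1), hy0, hy1]; ring
  -- split the main interval integral
  have hsplit : (∫ x in (0:ℝ)..1, y x *
        (ω₀ * deriv (deriv y) x - ω₁ * deriv (deriv (deriv y)) x - ω₂ * deriv y x))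
      = ω₀ * (∫ x in (0:ℝ)..1, y x * deriv (deriv y) x)
        - ω₁ * (∫ x in (0:ℝ)..1, y x * deriv (deriv (deriv y)) x)
        - ω₂ * (∫ x in (0:ℝ)..1, y x * deriv y x) := by
    rw [← intervalIntegral.integral_const_mul, ← intervalIntegral.integral_const_mul,
      ← intervalIntegral.integral_const_mul, ← intervalIntegral.integral_sub, ←
      intervalIntegral.integral_sub]
    · exact intervalIntegral.integral_congr fun x _ => by ring
    · exact ((continuous_const.mul (hcy.mul hc2)).intervalIntegrable 0 1).sub
        ((continuous_const.mul (hcy.mul hc3)).intervalIntegrable 0 1)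
    · exact (continuous_const.mul (hcy.mul hc1)).intervalIntegrable 0 1
    · exact (continuous_const.mul (hcy.mul hc2)).intervalIntegrable 0 1
    · exact (continuous_const.mul (hcy.mul hc3)).intervalIntegrable 0 1
  -- memory term
  have hmem : (∫ s in Set.Ioi (0:ℝ), β s * η' s * η s)
      = - (1/2) * ∫ s in Set.Ioi (0:ℝ), β' s * η s ^ 2 := by
    have hderiv : ∀ s ∈ Set.Ioi (0:ℝ), HasDerivAt (fun t => β t * η t ^ 2)
        (β' s * η s ^ 2 + β s * (2 * η s * η' s)) s := by
      intro s hs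
      have hm : Set.Ici (0:ℝ) ∈ nhds s := Ici_mem_nhds hs
      have hb : HasDerivAt β (β' s) s := (hβd s (Set.mem_Ici.mpr (le_of_lt hs))).hasDerivAt hm
      have he : HasDerivAt η (η' s) s := (hηd s (Set.mem_Ici.mpr (le_of_lt hs))).hasDerivAt hm
      have := hb.mul (he.pow 2)
      exact this.congr_deriv (by simp only [Pi.pow_apply]; push_cast; ring)
    have hcont : ContinuousWithinAt (fun t => β t * η t ^ 2) (Set.Ici 0) 0 := by
      have hb := (hβd 0 Set.self_mem_Ici).continuousWithinAt
      have he := (hηd 0 Set.self_mem_Ici).continuousWithinAt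
      exact hb.mul (he.pow 2)
    have hintsum : MeasureTheory.IntegrableOn
        (fun s => β' s * η s ^ 2 + β s * (2 * η s * η' s)) (Set.Ioi 0) := by
      refine (hint3.add (hint4.const_mul 2)).congr
        (Filter.Eventually.of_forall fun s => ?_)
      simp only [Pi.add_apply]; ring
    have key := MeasureTheory.integral_Ioi_of_hasDerivAt_of_tendsto
      hcont hderiv hintsum hlim
    rw [hη0] at key
    norm_num at key
    have e2 : (∫ s in Set.Ioi (0:ℝ), (β' s * η s ^ 2 + β s * (2 * η s * η' s)))
        = ∫ s in Set.Ioi (0:ℝ), (β' s * η s ^ 2 + 2 * (β s * η' s * η s)) :=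
      MeasureTheory.integral_congr_ae (Filter.Eventually.of_forall fun s => by ring)
    have key2 : (∫ s in Set.Ioi (0:ℝ), β' s * η s ^ 2)
        + 2 * (∫ s in Set.Ioi (0:ℝ), β s * η' s * η s) = 0 := by
      rw [← MeasureTheory.integral_const_mul, ← MeasureTheory.integral_add hint3
        (hint4.const_mul 2), ← e2]
      exact key
    linarith
  have hmem2 : (∫ s in Set.Ioi (0:ℝ), β s * (deriv y 0 - η' s) * η s)
      = deriv y 0 * (∫ s in Set.Ioi (0:ℝ), β s * η s)
        + (1/2) * ∫ s in Set.Ioi (0:ℝ), β' s * η s ^ 2 := by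
    have heq : (fun s => β s * (deriv y 0 - η' s) * η s)
        = fun s => deriv y 0 * (β s * η s) - β s * η' s * η s := by
      funext s; ring
    rw [heq, MeasureTheory.integral_sub (hint1.const_mul _) hint4,
      MeasureTheory.integral_const_mul, hmem]
    ring
  have hsq : (∫ x in (0:ℝ)..1, (deriv y x) ^ 2)
      = ∫ x in (0:ℝ)..1, deriv y x * deriv y x :=
    intervalIntegral.integral_congr fun x _ => by ring
  rw [hsplit, I1, I2, I3, J, hmem2, hsq, hyb]
  ring
end

section
/- Let ω₀ ≥ 0, ω₁ > 0, ω₂ ∈ ℝ, and ω₄ ∈ ℝ with |ω₄| < 1. Let β, ξ : [0,∞) → (0,∞) with β continuously differentiable, β′(s) ≤ −ξ(s)·β(s) for all s ≥ 0, and β/ξ integrable on (0,∞) with α₀ := ∫₀^∞ β(s)/ξ(s) ds. Let η : [0,∞) → ℝ be continuously differentiable with η(0) = 0, such that s ↦ β(s)η(s), s ↦ ξ(s)β(s)η(s)² and s ↦ β′(s)η(s)² are integrable on (0,∞) and β(s)η(s)² → 0 as s → ∞. Let y : [0,1] → ℝ be three times continuously differentiable with y(0) = y(1) = 0 and y′(1)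 = ω₄·y′(0) + ∫₀^∞ β(s)η(s) ds. Then for every ε > 0, setting κ := (1/2)·min{ ω₁(1−ω₄²) − ε|1+ω₁ω₄| , 1 − α₀(ω₁ + |1+ω₁ω₄|/ε) }, one has ∫₀¹ y(x)·(ω₀·y″(x) − ω₁·y‴(x) − ω₂·y′(x)) dx + ∫₀^∞ β(s)·(y′(0) − η′(s))·η(s) ds ≤ −ω₀·∫₀¹ y′(x)² dx − κ·y′(0)² + κ·∫₀^∞ β′(s)η(s)² ds. -/
open MeasureTheory Filter Set Real

private lemma kdvb_aux (ω₁ ω₄ ε a I D2 K α₀ : ℝ) (hω₁ : 0 < ω₁) (hε : 0 < ε)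
    (hI2 : I^2 ≤ α₀ * K) (hKD : D2 ≤ -K) (hK0 : 0 ≤ K) (hα₀0 : 0 ≤ α₀) :
    ω₁/2*((ω₄*a+I)^2 - a^2) + a*I + D2/2
      ≤ -((1/2)*min (ω₁*(1-ω₄^2) - ε*|1+ω₁*ω₄|) (1 - α₀*(ω₁ + |1+ω₁*ω₄|/ε)))*a^2
        + ((1/2)*min (ω₁*(1-ω₄^2) - ε*|1+ω₁*ω₄|) (1 - α₀*(ω₁ + |1+ω₁*ω₄|/ε)))*D2 := by
  set c := |1+ω₁*ω₄| with hc
  set q := c/ε with hqdef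
  set κ := (1/2)*min (ω₁*(1-ω₄^2) - ε*c) (1 - α₀*(ω₁ + q)) with hκ
  have hq : q*ε = c := div_mul_cancel₀ c (ne_of_gt hε)
  have hc0 : 0 ≤ c := abs_nonneg _
  have hq0 : 0 ≤ q := div_nonneg hc0 hε.le
  have hκ1 : κ ≤ (ω₁*(1-ω₄^2) - ε*c)/2 := by
    have := min_le_left (ω₁*(1-ω₄^2) - ε*c) (1 - α₀*(ω₁ + q)); rw [hκ]; linarith
  have hκ2 : κ ≤ (1 - α₀*(ω₁+q))/2 := by
    have := min_le_right (ω₁*(1-ω₄^2) - ε*c) (1 - α₀*(ω₁ + q)); rw [hκ]; linarith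
  have hP1 : 1+ω₁*ω₄ ≤ c := le_abs_self _
  have hP2 : -c ≤ 1+ω₁*ω₄ := neg_abs_le _
  have hqI : c*I^2 = ε*q*I^2 := by rw [← hq]; ring
  have step1m : 2*ε*((1+ω₁*ω₄)*(a*I)) ≤ 2*ε*((c*ε/2)*a^2 + (q/2)*I^2) := by
    nlinarith [mul_nonneg (by linarith : (0:ℝ) ≤ c - (1+ω₁*ω₄)) (sq_nonneg (ε*a + I)),
      mul_nonneg (by linarith : (0:ℝ) ≤ c + (1+ω₁*ω₄)) (sq_nonneg (ε*a - I))]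
  have step1 : (1+ω₁*ω₄)*(a*I) ≤ (c*ε/2)*a^2 + (q/2)*I^2 :=
    (mul_le_mul_iff_right₀ (by positivity)).mp step1m
  have hID : I^2 ≤ α₀*(-D2) :=
    le_trans hI2 (mul_le_mul_of_nonneg_left (by linarith) hα₀0)
  have h6 : (ω₁/2 + q/2)*I^2 ≤ (ω₁/2 + q/2)*(α₀*(-D2)) :=
    mul_le_mul_of_nonneg_left hID (by positivity)
  have hD0 : 0 ≤ -D2 := by nlinarith
  have hκa : κ*a^2 ≤ ((ω₁*(1-ω₄^2) - ε*c)/2)*a^2 := mul_le_mul_of_nonneg_right hκ1 (sq_nonneg a)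
  have hκD : κ*(-D2) ≤ ((1 - α₀*(ω₁+q))/2)*(-D2) := mul_le_mul_of_nonneg_right hκ2 hD0
  nlinarith [step1, h6, hκa, hκD]

set_option maxHeartbeats 1000000 in
/-- the dissipativity inequality (di) for the linear KdV–Burgers
operator: for every `ε > 0`, with
`κ = (1/2) min{ω₁(1-ω₄²) - ε|1+ω₁ω₄|, 1 - α₀(ω₁ + |1+ω₁ω₄|/ε)}`,
`⟨𝒜Θ,Θ⟩ ≤ -ω₀‖y'‖² - κ y'(0)² + κ ∫ β' η²`. -/
theorem kdvb_operator_dissipative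
    (ω₀ ω₁ ω₂ ω₄ : ℝ) (hω₀ : 0 ≤ ω₀) (hω₁ : 0 < ω₁) (hω₄ : |ω₄| < 1)
    (β β' ξ η η' : ℝ → ℝ) (y : ℝ → ℝ)
    (hβpos : ∀ s ∈ Set.Ici (0:ℝ), 0 < β s)
    (hξpos : ∀ s ∈ Set.Ici (0:ℝ), 0 < ξ s)
    (hβd : ∀ s ∈ Set.Ici (0:ℝ), HasDerivWithinAt β (β' s) (Set.Ici 0) s)
    (hβ'cont : ContinuousOn β' (Set.Ici 0))
    (hβ'le : ∀ s ∈ Set.Ici (0:ℝ), β' s ≤ -ξ s * β s)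
    (hβξint : MeasureTheory.IntegrableOn (fun s => β s / ξ s) (Set.Ioi 0))
    (α₀ : ℝ) (hα₀ : α₀ = ∫ s in Set.Ioi (0:ℝ), β s / ξ s)
    (hηd : ∀ s ∈ Set.Ici (0:ℝ), HasDerivWithinAt η (η' s) (Set.Ici 0) s)
    (hη'cont : ContinuousOn η' (Set.Ici 0))
    (hη0 : η 0 = 0)
    (hint1 : MeasureTheory.IntegrableOn (fun s => β s * η s) (Set.Ioi 0))
    (hint2 : MeasureTheory.IntegrableOn (fun s => ξ s * β s * η s ^ 2) (Set.Ioi 0))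
    (hint3 : MeasureTheory.IntegrableOn (fun s => β' s * η s ^ 2) (Set.Ioi 0))
    (hint4 : MeasureTheory.IntegrableOn (fun s => β s * η s ^ 2) (Set.Ioi 0))
    (hint5 : MeasureTheory.IntegrableOn (fun s => β s * η' s * η s) (Set.Ioi 0))
    (hlim : Filter.Tendsto (fun s => β s * η s ^ 2) Filter.atTop (nhds 0))
    (hy : ContDiff ℝ 3 y) (hy0 : y 0 = 0) (hy1 : y 1 = 0)
    (hyb : deriv y 1 = ω₄ * deriv y 0 + ∫ s in Set.Ioi (0:ℝ), β s * η s) :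
    ∀ ε : ℝ, 0 < ε →
      (∫ x in (0:ℝ)..1, y x *
          (ω₀ * deriv (deriv y) x - ω₁ * deriv (deriv (deriv y)) x - ω₂ * deriv y x))
        + (∫ s in Set.Ioi (0:ℝ), β s * (deriv y 0 - η' s) * η s)
      ≤ -ω₀ * (∫ x in (0:ℝ)..1, (deriv y x) ^ 2)
        - ((1 / 2) * min (ω₁ * (1 - ω₄ ^ 2) - ε * |1 + ω₁ * ω₄|)
              (1 - α₀ * (ω₁ + |1 + ω₁ * ω₄| / ε))) * (deriv y 0) ^ 2
        + ((1 / 2) * min (ω₁ * (1 - ω₄ ^ 2) - ε * |1 + ω₁ * ω₄|)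
              (1 - α₀ * (ω₁ + |1 + ω₁ * ω₄| / ε)))
            * ∫ s in Set.Ioi (0:ℝ), β' s * η s ^ 2 := by
  intro ε hε
  -- smoothness bookkeeping
  have h1 : ContDiff ℝ 2 (deriv y) :=
    ((contDiff_succ_iff_deriv (n := 2)).mp (by norm_num at hy ⊢; exact hy)).2.2
  have h2 : ContDiff ℝ 1 (deriv (deriv y)) :=
    ((contDiff_succ_iff_deriv (n := 1)).mp (by norm_num at h1 ⊢; exact h1)).2.2
  have cy : Continuous y := hy.continuous
  have cdy : Continuous (deriv y) := h1.continuous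
  have cddy : Continuous (deriv (deriv y)) := h2.continuous
  have cdddy : Continuous (deriv (deriv (deriv y))) := (contDiff_one_iff_deriv.mp h2).2
  have hyd : ∀ x ∈ uIcc (0:ℝ) 1, HasDerivAt y (deriv y x) x :=
    fun x _ => ((hy.differentiable (by norm_num)) x).hasDerivAt
  have hdyd : ∀ x ∈ uIcc (0:ℝ) 1, HasDerivAt (deriv y) (deriv (deriv y) x) x :=
    fun x _ => ((h1.differentiable (by norm_num)) x).hasDerivAt
  have hddyd : ∀ x ∈ uIcc (0:ℝ) 1, HasDerivAt (deriv (deriv y)) (deriv (deriv (deriv y)) x) x :=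
    fun x _ => ((h2.differentiable (by norm_num)) x).hasDerivAt
  set a := deriv y 0 with ha
  set b := deriv y 1 with hb
  set I := ∫ s in Set.Ioi (0:ℝ), β s * η s with hI
  set K := ∫ s in Set.Ioi (0:ℝ), ξ s * β s * η s ^ 2 with hK
  set D2 := ∫ s in Set.Ioi (0:ℝ), β' s * η s ^ 2 with hD2
  -- interval integration by parts
  have e1 : (∫ x in (0:ℝ)..1, y x * deriv (deriv y) x)
      = -(∫ x in (0:ℝ)..1, deriv y x * deriv y x) := by
    have := intervalIntegral.integral_mul_deriv_eq_deriv_mul hyd hdyd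
      (cdy.intervalIntegrable 0 1) (cddy.intervalIntegrable 0 1)
    rw [this, hy0, hy1]; ring
  have e3 : (∫ x in (0:ℝ)..1, deriv y x * deriv (deriv y) x) = (b*b - a*a)/2 := by
    have heq := intervalIntegral.integral_mul_deriv_eq_deriv_mul hdyd hdyd
      (cddy.intervalIntegrable 0 1) (cddy.intervalIntegrable 0 1)
    have hcomm : (∫ x in (0:ℝ)..1, deriv (deriv y) x * deriv y x)
        = ∫ x in (0:ℝ)..1, deriv y x * deriv (deriv y) x := by
      apply intervalIntegral.integral_congr
      intro x _; exact mul_comm _ _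
    rw [hcomm] at heq
    rw [← ha, ← hb] at heq
    linarith
  have e2 : (∫ x in (0:ℝ)..1, y x * deriv (deriv (deriv y)) x) = -((b*b - a*a)/2) := by
    have := intervalIntegral.integral_mul_deriv_eq_deriv_mul hyd hddyd
      (cdy.intervalIntegrable 0 1) (cdddy.intervalIntegrable 0 1)
    rw [this, hy0, hy1, e3]; ring
  have e4 : (∫ x in (0:ℝ)..1, y x * deriv y x) = 0 := by
    have heq := intervalIntegral.integral_mul_deriv_eq_deriv_mul hyd hyd
      (cdy.intervalIntegrable 0 1) (cdy.intervalIntegrable 0 1)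
    have hcomm : (∫ x in (0:ℝ)..1, deriv y x * y x)
        = ∫ x in (0:ℝ)..1, y x * deriv y x := by
      apply intervalIntegral.integral_congr
      intro x _; exact mul_comm _ _
    rw [hcomm, hy0, hy1] at heq
    linarith
  have hsplit1 : (∫ x in (0:ℝ)..1, y x *
        (ω₀ * deriv (deriv y) x - ω₁ * deriv (deriv (deriv y)) x - ω₂ * deriv y x))
      = ω₀ * (∫ x in (0:ℝ)..1, y x * deriv (deriv y) x)
        - ω₁ * (∫ x in (0:ℝ)..1, y x * deriv (deriv (deriv y)) x)
        - ω₂ * (∫ x in (0:ℝ)..1, y x * deriv y x) := by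
    rw [show (fun x => y x *
          (ω₀ * deriv (deriv y) x - ω₁ * deriv (deriv (deriv y)) x - ω₂ * deriv y x))
        = fun x => (ω₀ * (y x * deriv (deriv y) x) - ω₁ * (y x * deriv (deriv (deriv y)) x))
            - ω₂ * (y x * deriv y x) from funext fun x => by ring]
    rw [intervalIntegral.integral_sub
          (f := fun x => ω₀ * (y x * deriv (deriv y) x) - ω₁ * (y x * deriv (deriv (deriv y)) x))
          (g := fun x => ω₂ * (y x * deriv y x)) ((((continuous_const.mul (cy.mul cddy)).sub
          (continuous_const.mul (cy.mul cdddy)))).intervalIntegrable 0 1)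
        ((continuous_const.mul (cy.mul cdy)).intervalIntegrable 0 1),
      intervalIntegral.integral_sub (f := fun x => ω₀ * (y x * deriv (deriv y) x))
          (g := fun x => ω₁ * (y x * deriv (deriv (deriv y)) x))
          ((continuous_const.mul (cy.mul cddy)).intervalIntegrable 0 1)
        ((continuous_const.mul (cy.mul cdddy)).intervalIntegrable 0 1),
      intervalIntegral.integral_const_mul, intervalIntegral.integral_const_mul,
      intervalIntegral.integral_const_mul]
  -- improper integration by parts for the memory term
  set F' : ℝ → ℝ := fun s => β' s * η s ^ 2 + β s * (2 * η s * η' s) with hF'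
  have hFd : ∀ s ∈ Set.Ici (0:ℝ), HasDerivWithinAt (fun s => β s * η s ^ 2) (F' s) (Set.Ici 0) s := by
    intro s hs
    have := (hβd s hs).mul ((hηd s hs).pow 2)
    refine this.congr_deriv ?_
    show β' s * η s ^ 2 + β s * (((2:ℕ):ℝ) * η s ^ (2 - 1) * η' s)
      = β' s * η s ^ 2 + β s * (2 * η s * η' s)
    push_cast
    ring
  have hint5' : MeasureTheory.IntegrableOn (fun s => β s * (2 * η s * η' s)) (Set.Ioi 0) :=
    (hint5.const_mul 2).congr (Filter.Eventually.of_forall fun s => by ring)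
  have key : (∫ s in Set.Ioi (0:ℝ), F' s) = 0 - (β 0 * η 0 ^ 2) := by
    refine integral_Ioi_of_hasDerivAt_of_tendsto ?_ ?_ ?_ hlim
    · exact (hFd 0 Set.self_mem_Ici).continuousWithinAt
    · intro x hx
      exact (hFd x (Set.Ioi_subset_Ici_self hx)).hasDerivAt (Ici_mem_nhds hx)
    · exact hint3.add hint5'
  rw [hη0] at key
  have splitF : (∫ s in Set.Ioi (0:ℝ), F' s)
      = D2 + ∫ s in Set.Ioi (0:ℝ), β s * (2 * η s * η' s) :=
    integral_add hint3 hint5'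
  have e2' : (∫ s in Set.Ioi (0:ℝ), β s * (2 * η s * η' s))
      = 2 * ∫ s in Set.Ioi (0:ℝ), β s * η' s * η s := by
    rw [← integral_const_mul]
    congr 1; funext s; ring
  have hparts : (∫ s in Set.Ioi (0:ℝ), β s * η' s * η s) = -(1/2) * D2 := by
    rw [splitF, e2'] at key
    simp at key ⊢
    linarith
  -- split the second big integral
  have hsecond : (∫ s in Set.Ioi (0:ℝ), β s * (a - η' s) * η s)
      = a * I - ∫ s in Set.Ioi (0:ℝ), β s * η' s * η s := by
    rw [show (fun s => β s * (a - η' s) * η s)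
        = fun s => a * (β s * η s) - β s * η' s * η s from funext fun s => by ring]
    rw [integral_sub (hint1.const_mul a) hint5, integral_const_mul]
  -- Cauchy–Schwarz
  have habs : MeasureTheory.IntegrableOn (fun s => β s * |η s|) (Set.Ioi 0) := by
    refine hint1.abs.congr ?_
    filter_upwards [ae_restrict_mem measurableSet_Ioi] with s hs
    rw [abs_mul, abs_of_pos (hβpos s (Set.Ioi_subset_Ici_self hs))]
  set J := ∫ s in Set.Ioi (0:ℝ), β s * |η s| with hJ
  have hquad : ∀ t : ℝ, 0 ≤ α₀ * (t * t) + (2 * J) * t + K := by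
    intro t
    have hpt : ∀ s ∈ Set.Ioi (0:ℝ),
        0 ≤ (β s / ξ s) * (t * t) + (2 * (β s * |η s|)) * t + ξ s * β s * η s ^ 2 := by
      intro s hs
      have hβ := hβpos s (Set.Ioi_subset_Ici_self hs)
      have hξ := hξpos s (Set.Ioi_subset_Ici_self hs)
      have keyq : (β s / ξ s) * (t * t) + (2 * (β s * |η s|)) * t + ξ s * β s * η s ^ 2
          = (β s / ξ s) * ((t + ξ s * |η s|) * (t + ξ s * |η s|)) := by
        field_simp
        ring_nf
        rw [sq_abs]
      rw [keyq]
      exact mul_nonneg (div_nonneg hβ.le hξ.le) (mul_self_nonneg _)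
    have hnn : 0 ≤ ∫ s in Set.Ioi (0:ℝ),
        ((β s / ξ s) * (t * t) + (2 * (β s * |η s|)) * t + ξ s * β s * η s ^ 2) :=
      setIntegral_nonneg measurableSet_Ioi hpt
    have hsplitq : (∫ s in Set.Ioi (0:ℝ),
        ((β s / ξ s) * (t * t) + (2 * (β s * |η s|)) * t + ξ s * β s * η s ^ 2))
        = α₀ * (t * t) + (2 * J) * t + K := by
      have hfg : MeasureTheory.IntegrableOn
          (fun s => β s / ξ s * (t * t) + 2 * (β s * |η s|) * t) (Set.Ioi 0) :=
        (hβξint.mul_const (t*t)).add ((habs.const_mul 2).mul_const t)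
      rw [integral_add (f := fun s => β s / ξ s * (t * t) + 2 * (β s * |η s|) * t)
          (g := fun s => ξ s * β s * η s ^ 2) hfg hint2,
        integral_add (f := fun s => β s / ξ s * (t * t)) (g := fun s => 2 * (β s * |η s|) * t)
          (hβξint.mul_const (t*t)) ((habs.const_mul 2).mul_const t),
        integral_mul_const, integral_mul_const, integral_const_mul, hα₀]
    linarith [hsplitq ▸ hnn]
  have hd := discrim_le_zero hquad
  rw [discrim] at hd
  have hIJ : |I| ≤ J := by
    rw [hI, ← Real.norm_eq_abs]
    refine le_trans (norm_integral_le_integral_norm _) (le_of_eq (integral_congr_ae ?_))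
    filter_upwards [ae_restrict_mem measurableSet_Ioi] with s hs
    rw [Real.norm_eq_abs, abs_mul, abs_of_pos (hβpos s (Set.Ioi_subset_Ici_self hs))]
  have hIJ2 : I ^ 2 ≤ J ^ 2 := by
    rw [← sq_abs I]
    exact pow_le_pow_left₀ (abs_nonneg I) hIJ 2
  have hI2 : I ^ 2 ≤ α₀ * K := by nlinarith
  -- remaining sign facts
  have hK0 : 0 ≤ K := by
    refine setIntegral_nonneg measurableSet_Ioi fun s hs => ?_
    have hβ := hβpos s (Set.Ioi_subset_Ici_self hs)
    have hξ := hξpos s (Set.Ioi_subset_Ici_self hs)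
    positivity
  have hα₀0 : 0 ≤ α₀ := by
    rw [hα₀]
    refine setIntegral_nonneg measurableSet_Ioi fun s hs => ?_
    exact div_nonneg (hβpos s (Set.Ioi_subset_Ici_self hs)).le (hξpos s (Set.Ioi_subset_Ici_self hs)).le
  have hKD : D2 ≤ -K := by
    have hmono : D2 ≤ ∫ s in Set.Ioi (0:ℝ), -(ξ s * β s * η s ^ 2) := by
      refine setIntegral_mono_on hint3 hint2.neg measurableSet_Ioi fun s hs => ?_
      have h := mul_le_mul_of_nonneg_right (hβ'le s (Set.Ioi_subset_Ici_self hs)) (sq_nonneg (η s))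
      nlinarith [h]
    rw [integral_neg] at hmono
    exact hmono
  -- assemble
  have hSeq : (∫ x in (0:ℝ)..1, (deriv y x) ^ 2)
      = ∫ x in (0:ℝ)..1, deriv y x * deriv y x := by
    simp only [pow_two]
  rw [hsplit1, e1, e2, e4, hsecond, hparts, hSeq]
  have hfin := kdvb_aux ω₁ ω₄ ε a I D2 K α₀ hω₁ hε hI2 hKD hK0 hα₀0
  rw [hyb]
  linarith [hfin]
end

section
/- Let ν₀, ν₂, ν₃ ∈ ℝ. Let β : [0,∞) → (0,∞) be continuously differentiable, and let η : [0,∞) → ℝ be continuously differentiable with η(0) = 0, such that s ↦ β(s)η(s), s ↦ β(s)η(s)² and s ↦ β′(s)η(s)² are integrable on (0,∞) and β(s)η(s)² → 0 as s → ∞. Let y : [0,1] → ℝ be four times continuously differentiable with y(0) = y(1) = 0, y″(1) = 0, and y″(0) = ν₃·y′(0) + ∫₀^∞ β(s)η(s) ds. Then ∫₀¹ y(x)·(−ν₀·y⁗(x) − ν₂·y″(x)) dx + ∫₀^∞ β(s)·(y′(0) − η′(s))·η(s) ds = −ν₀ν₃·y′(0)² − ν₀·∫₀¹ y″(x)² dx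 + ν₂·∫₀¹ y′(x)² dx + (1−ν₀)·y′(0)·∫₀^∞ β(s)η(s) ds + (1/2)·∫₀^∞ β′(s)η(s)² ds. -/
open MeasureTheory Filter Set Real

/-- the integration-by-parts identity computing `⟨𝒦Λ,Λ⟩` for the
linear Kuramoto–Sivashinsky operator on the history space. -/
theorem ks_operator_inner_product_identity
    (ν₀ ν₂ ν₃ : ℝ) (β β' η η' : ℝ → ℝ) (y : ℝ → ℝ)
    (hβpos : ∀ s ∈ Set.Ici (0:ℝ), 0 < β s)
    (hβd : ∀ s ∈ Set.Ici (0:ℝ), HasDerivWithinAt β (β' s) (Set.Ici 0) s)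
    (hβ'cont : ContinuousOn β' (Set.Ici 0))
    (hηd : ∀ s ∈ Set.Ici (0:ℝ), HasDerivWithinAt η (η' s) (Set.Ici 0) s)
    (hη'cont : ContinuousOn η' (Set.Ici 0))
    (hη0 : η 0 = 0)
    (hint1 : MeasureTheory.IntegrableOn (fun s => β s * η s) (Set.Ioi 0))
    (hint2 : MeasureTheory.IntegrableOn (fun s => β s * η s ^ 2) (Set.Ioi 0))
    (hint3 : MeasureTheory.IntegrableOn (fun s => β' s * η s ^ 2) (Set.Ioi 0))
    (hint4 : MeasureTheory.IntegrableOn (fun s => β s * η' s * η s) (Set.Ioi 0))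
    (hlim : Filter.Tendsto (fun s => β s * η s ^ 2) Filter.atTop (nhds 0))
    (hy : ContDiff ℝ 4 y) (hy0 : y 0 = 0) (hy1 : y 1 = 0)
    (hy''1 : deriv (deriv y) 1 = 0)
    (hy''0 : deriv (deriv y) 0 = ν₃ * deriv y 0 + ∫ s in Set.Ioi (0:ℝ), β s * η s) :
    (∫ x in (0:ℝ)..1, y x *
        (-ν₀ * deriv (deriv (deriv (deriv y))) x - ν₂ * deriv (deriv y) x))
      + (∫ s in Set.Ioi (0:ℝ), β s * (deriv y 0 - η' s) * η s)
    = -(ν₀ * ν₃) * (deriv y 0) ^ 2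
      - ν₀ * (∫ x in (0:ℝ)..1, (deriv (deriv y) x) ^ 2)
      + ν₂ * (∫ x in (0:ℝ)..1, (deriv y x) ^ 2)
      + (1 - ν₀) * deriv y 0 * (∫ s in Set.Ioi (0:ℝ), β s * η s)
      + (1 / 2) * ∫ s in Set.Ioi (0:ℝ), β' s * η s ^ 2 := by
  -- notation
  set c := deriv y 0 with hc
  set y1 := deriv y with hy1def
  set y2 := deriv y1 with hy2def
  set y3 := deriv y2 with hy3def
  set y4 := deriv y3 with hy4def
  -- smoothness facts
  have h4 : Differentiable ℝ y ∧ ContDiff ℝ 3 y1 := by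
    rw [show (4 : WithTop ℕ∞) = 3 + 1 from rfl, contDiff_succ_iff_deriv] at hy
    exact ⟨hy.1, hy.2.2⟩
  have h3 : Differentiable ℝ y1 ∧ ContDiff ℝ 2 y2 := by
    have := h4.2
    rw [show (3 : WithTop ℕ∞) = 2 + 1 from rfl, contDiff_succ_iff_deriv] at this
    exact ⟨this.1, this.2.2⟩
  have h2 : Differentiable ℝ y2 ∧ ContDiff ℝ 1 y3 := by
    have := h3.2
    rw [show (2 : WithTop ℕ∞) = 1 + 1 from rfl, contDiff_succ_iff_deriv] at this
    exact ⟨this.1, this.2.2⟩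
  have h1 : Differentiable ℝ y3 ∧ Continuous y4 := by
    have := h2.2
    rw [contDiff_one_iff_deriv] at this
    exact ⟨this.1, this.2⟩
  have cy : Continuous y := h4.1.continuous
  have cy1 : Continuous y1 := h3.1.continuous
  have cy2 : Continuous y2 := h2.1.continuous
  have cy3 : Continuous y3 := h1.1.continuous
  have cy4 : Continuous y4 := h1.2
  -- interval integration by parts I: ∫ y * y4 = y'(0)*y''(0) + ∫ y2^2
  have ibp1 : (∫ x in (0:ℝ)..1, y x * y4 x)
      = y 1 * y3 1 - y 0 * y3 0 - ∫ x in (0:ℝ)..1, y1 x * y3 x := by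
    exact intervalIntegral.integral_mul_deriv_eq_deriv_mul (u := y) (v := y3)
      (u' := y1) (v' := y4)
      (fun x _ => h4.1.differentiableAt.hasDerivAt)
      (fun x _ => h1.1.differentiableAt.hasDerivAt)
      (cy1.intervalIntegrable 0 1) (cy4.intervalIntegrable 0 1)
  have ibp2 : (∫ x in (0:ℝ)..1, y1 x * y3 x)
      = y1 1 * y2 1 - y1 0 * y2 0 - ∫ x in (0:ℝ)..1, y2 x * y2 x := by
    exact intervalIntegral.integral_mul_deriv_eq_deriv_mul (u := y1) (v := y2)
      (u' := y2) (v' := y3)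
      (fun x _ => h3.1.differentiableAt.hasDerivAt)
      (fun x _ => h2.1.differentiableAt.hasDerivAt)
      (cy2.intervalIntegrable 0 1) (cy3.intervalIntegrable 0 1)
  have ibp3 : (∫ x in (0:ℝ)..1, y x * y2 x)
      = y 1 * y1 1 - y 0 * y1 0 - ∫ x in (0:ℝ)..1, y1 x * y1 x := by
    exact intervalIntegral.integral_mul_deriv_eq_deriv_mul (u := y) (v := y1)
      (u' := y1) (v' := y2)
      (fun x _ => h4.1.differentiableAt.hasDerivAt)
      (fun x _ => h3.1.differentiableAt.hasDerivAt)
      (cy1.intervalIntegrable 0 1) (cy2.intervalIntegrable 0 1)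
  have sq2 : (∫ x in (0:ℝ)..1, y2 x * y2 x) = ∫ x in (0:ℝ)..1, (y2 x) ^ 2 := by
    apply intervalIntegral.integral_congr; intro x _; ring
  have sq1 : (∫ x in (0:ℝ)..1, y1 x * y1 x) = ∫ x in (0:ℝ)..1, (y1 x) ^ 2 := by
    apply intervalIntegral.integral_congr; intro x _; ring
  have hA : (∫ x in (0:ℝ)..1, y x * y4 x)
      = c * y2 0 + ∫ x in (0:ℝ)..1, (y2 x) ^ 2 := by
    rw [ibp1, ibp2, sq2, hy0, hy1, hy''1]; ring
  have hB : (∫ x in (0:ℝ)..1, y x * y2 x) = -∫ x in (0:ℝ)..1, (y1 x) ^ 2 := by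
    rw [ibp3, sq1, hy0, hy1]; ring
  -- split the first integral
  have hsplit : (∫ x in (0:ℝ)..1, y x * (-ν₀ * y4 x - ν₂ * y2 x))
      = -ν₀ * (∫ x in (0:ℝ)..1, y x * y4 x) - ν₂ * ∫ x in (0:ℝ)..1, y x * y2 x := by
    rw [← intervalIntegral.integral_const_mul, ← intervalIntegral.integral_const_mul,
      ← intervalIntegral.integral_sub
        (IntervalIntegrable.const_mul (f := fun x => y x * y4 x) ((cy.mul cy4).intervalIntegrable _ _) _)
        (IntervalIntegrable.const_mul (f := fun x => y x * y2 x) ((cy.mul cy2).intervalIntegrable _ _) _)]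
    apply intervalIntegral.integral_congr; intro x _; ring
  -- history part: FTC on Ioi for β η²
  have hFTC : (∫ s in Set.Ioi (0:ℝ), (β' s * η s ^ 2 + 2 * (β s * η' s * η s)))
      = 0 - β 0 * η 0 ^ 2 := by
    refine integral_Ioi_of_hasDerivAt_of_tendsto
      (f := fun s => β s * η s ^ 2)
      (((hβd 0 self_mem_Ici).continuousWithinAt).mul
        (((hηd 0 self_mem_Ici).continuousWithinAt).pow 2))
      (fun x hx => ?_) ?_ hlim
    · have hβx := ((hβd x (Set.mem_Ici.mpr (le_of_lt hx))).hasDerivAt (Ici_mem_nhds hx))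
      have hηx := ((hηd x (Set.mem_Ici.mpr (le_of_lt hx))).hasDerivAt (Ici_mem_nhds hx))
      have h : HasDerivAt (fun s => β s * η s ^ 2) _ x := hβx.mul (hηx.pow 2)
      refine h.congr_deriv ?_
      push_cast
      ring
    · exact hint3.add (hint4.const_mul 2)
  have hJ4 : (∫ s in Set.Ioi (0:ℝ), β s * η' s * η s)
      = -(1/2) * ∫ s in Set.Ioi (0:ℝ), β' s * η s ^ 2 := by
    have hs := hFTC
    rw [integral_add hint3 (hint4.const_mul 2)] at hs
    have h2i : (∫ s in Set.Ioi (0:ℝ), 2 * (β s * η' s * η s))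
        = 2 * ∫ s in Set.Ioi (0:ℝ), β s * η' s * η s := integral_const_mul 2 _
    rw [h2i, hη0] at hs
    linarith
  have hC : (∫ s in Set.Ioi (0:ℝ), β s * (c - η' s) * η s)
      = c * (∫ s in Set.Ioi (0:ℝ), β s * η s)
        + (1/2) * ∫ s in Set.Ioi (0:ℝ), β' s * η s ^ 2 := by
    have : (∫ s in Set.Ioi (0:ℝ), β s * (c - η' s) * η s)
        = ∫ s in Set.Ioi (0:ℝ), (c * (β s * η s) - β s * η' s * η s) := by
      apply setIntegral_congr_fun measurableSet_Ioi; intro s _; ring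
    rw [this, integral_sub (hint1.const_mul c) hint4, integral_const_mul, hJ4]
    ring
  rw [hsplit, hA, hB, hC, hy''0]
  ring
end
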